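/- arXiv:2206.09160 — 3 statements merged into one kernel-verified Lean document; each statement's English description precedes it below -/
import Mathlib

section
/- Let t₁ ≤ t₂ and μ ≥ 0 be real numbers. For every t₃ ∈ ℝ, the minimizer of w ↦ μ·|w| + (1/2)·(t₃ − w)² over w ∈ [t₁, t₂] equals the projection onto [t₁, t₂] of the soft-thresholded value t₃ − proj_{[−μ,μ]}(t₃), i.e. prox_{μ|·| + I_{[t₁,t₂]}}(t₃) = proj_{[t₁,t₂]}(t₃ − proj_{[−μ,μ]}(t₃)). -/
/-!
Write `f w = μ|w| + (t₃ - w)² / 2`. If some `h ∈ ∂(μ|·|)(p)` satisfies `(h + p - t₃) (w - p) ≥ 0`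
on `[t₁, t₂]` (the optimality condition), then `f p + (w - p)² / 2 ≤ f w` there, which gives
minimality and uniqueness at once. At the soft threshold `s = t₃ - c`, `c = proj_{[-μ,μ]} t₃`, the
number `c` is a subgradient with `c + s - t₃ = 0`. If clamping moves `s` up to `t₁` (down to `t₂`),
monotonicity of `∂|·|` yields a subgradient at the clamped point that is `≥ c` (`≤ c`), and this
keeps the optimality condition.
-/

/-- `∂(μ|·|)(p)` is `{μ • sign p}` for `p ≠ 0` and `[-μ, μ]` for `p = 0`. -/
def IsAbsSubgradient (μ h p : ℝ) : Prop := |h| ≤ μ ∧ h * p = μ * |p|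

namespace IsAbsSubgradient

variable {μ h p : ℝ}

theorem mul_le (hh : IsAbsSubgradient μ h p) (w : ℝ) : h * w ≤ μ * |w| :=
  calc h * w ≤ |h| * |w| := abs_mul h w ▸ le_abs_self _
    _ ≤ μ * |w| := mul_le_mul_of_nonneg_right hh.1 (abs_nonneg w)

theorem neg (hh : IsAbsSubgradient μ h p) : IsAbsSubgradient μ (-h) (-p) :=
  ⟨by rw [abs_neg]; exact hh.1, by rw [abs_neg, ← hh.2]; ring⟩

theorem exists_ge_of_le (hh : IsAbsSubgradient μ h p) {q : ℝ} (hpq : p ≤ q) :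
    ∃ h', IsAbsSubgradient μ h' q ∧ h ≤ h' := by
  have hμ : 0 ≤ μ := (abs_nonneg h).trans hh.1
  rcases lt_or_ge 0 q with hq | hq
  · exact ⟨μ, ⟨(abs_of_nonneg hμ).le, by rw [abs_of_pos hq]⟩, (le_abs_self h).trans hh.1⟩
  refine ⟨h, ⟨hh.1, ?_⟩, le_rfl⟩
  rcases hq.lt_or_eq with hq | rfl
  · have hp : p < 0 := hpq.trans_lt hq
    have hh_eq : h = -μ := by
      have := hh.2
      rw [abs_of_neg hp] at this
      exact mul_right_cancel₀ hp.ne (by linarith)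
    rw [hh_eq, abs_of_neg hq]; ring
  · simp

theorem exists_le_of_le (hh : IsAbsSubgradient μ h p) {q : ℝ} (hqp : q ≤ p) :
    ∃ h', IsAbsSubgradient μ h' q ∧ h' ≤ h := by
  obtain ⟨h', hh', hle⟩ := hh.neg.exists_ge_of_le (neg_le_neg hqp)
  exact ⟨-h', by simpa using hh'.neg, by linarith⟩

theorem add_sq_le (hh : IsAbsSubgradient μ h p) {t w : ℝ}
    (hnormal : 0 ≤ (h + p - t) * (w - p)) :
    μ * |p| + 1 / 2 * (t - p) ^ 2 + 1 / 2 * (w - p) ^ 2 ≤ μ * |w| + 1 / 2 * (t - w) ^ 2 := by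
  nlinarith [hh.mul_le w, hh.2]

end IsAbsSubgradient

theorem isAbsSubgradient_clamp {μ : ℝ} (hμ : 0 ≤ μ) (t : ℝ) :
    IsAbsSubgradient μ (max (-μ) (min μ t)) (t - max (-μ) (min μ t)) := by
  rcases le_total μ t with ht | ht
  · rw [min_eq_left ht, max_eq_right (by linarith)]
    exact ⟨(abs_of_nonneg hμ).le, by rw [abs_of_nonneg (sub_nonneg.mpr ht)]⟩
  rcases le_total t (-μ) with ht' | ht'
  · rw [min_eq_right ht, max_eq_left ht']
    exact ⟨by rw [abs_neg, abs_of_nonneg hμ], by rw [abs_of_nonpos (by linarith)]; ring⟩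
  · rw [min_eq_right ht, max_eq_right ht', sub_self]
    exact ⟨abs_le.mpr ⟨ht', ht⟩, by simp⟩

theorem IsAbsSubgradient.exists_normal_clamp {μ c t t₁ t₂ : ℝ} (ht : t₁ ≤ t₂)
    (hc : IsAbsSubgradient μ c (t - c)) :
    ∃ h, IsAbsSubgradient μ h (max t₁ (min t₂ (t - c))) ∧
      ∀ w ∈ Set.Icc t₁ t₂,
        0 ≤ (h + max t₁ (min t₂ (t - c)) - t) * (w - max t₁ (min t₂ (t - c))) := by
  rcases le_total (t - c) t₁ with hs | hs
  · rw [min_eq_right (hs.trans ht), max_eq_left hs]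
    obtain ⟨h, hh, hch⟩ := hc.exists_ge_of_le hs
    exact ⟨h, hh, fun w hw => mul_nonneg (by linarith) (by linarith [hw.1])⟩
  rcases le_total t₂ (t - c) with hs' | hs'
  · rw [min_eq_left hs', max_eq_right ht]
    obtain ⟨h, hh, hhc⟩ := hc.exists_le_of_le hs'
    exact ⟨h, hh, fun w hw => mul_nonneg_of_nonpos_of_nonpos (by linarith) (by linarith [hw.2])⟩
  · rw [min_eq_right hs', max_eq_right hs]
    exact ⟨c, hc, fun w _ => by simp⟩

theorem stmt_4 (t₁ t₂ μ : ℝ) (ht : t₁ ≤ t₂) (hμ : 0 ≤ μ) :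
    ∀ t₃ : ℝ,
      max t₁ (min t₂ (t₃ - max (-μ) (min μ t₃))) ∈ Set.Icc t₁ t₂ ∧
      (∀ w ∈ Set.Icc t₁ t₂,
        μ * |max t₁ (min t₂ (t₃ - max (-μ) (min μ t₃)))| +
          (1 / 2) * (t₃ - max t₁ (min t₂ (t₃ - max (-μ) (min μ t₃)))) ^ 2 ≤
        μ * |w| + (1 / 2) * (t₃ - w) ^ 2) ∧
      (∀ w ∈ Set.Icc t₁ t₂,
        (∀ w' ∈ Set.Icc t₁ t₂,
          μ * |w| + (1 / 2) * (t₃ - w) ^ 2 ≤ μ * |w'| + (1 / 2) * (t₃ - w') ^ 2) →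
        w = max t₁ (min t₂ (t₃ - max (-μ) (min μ t₃)))) := by
  intro t₃
  obtain ⟨h, hh, hnormal⟩ := (isAbsSubgradient_clamp hμ t₃).exists_normal_clamp ht
  set p := max t₁ (min t₂ (t₃ - max (-μ) (min μ t₃)))
  have hp : p ∈ Set.Icc t₁ t₂ := ⟨le_max_left _ _, max_le ht (min_le_left _ _)⟩
  have growth (w) (hw : w ∈ Set.Icc t₁ t₂) := hh.add_sq_le (hnormal w hw)
  refine ⟨hp, fun w hw => by linarith [growth w hw, sq_nonneg (w - p)], fun w hw hmin => ?_⟩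
  have hsq : (w - p) ^ 2 = 0 :=
    le_antisymm (by linarith [growth w hw, hmin p hp]) (sq_nonneg _)
  exact sub_eq_zero.mp (pow_eq_zero_iff two_ne_zero |>.mp hsq)
end

section
/- With the quasi-interpolation operator I of the previous context, for every u ∈ L¹(D) one has ‖I u‖_{L¹(D)} ≤ ‖u‖_{L¹(D)}. -/
/-!
Since the weights `φ j` are nonnegative, `|I u| ≤ I |u|` pointwise. Since they form a partition of
unity, `I` preserves integrals: `∫ I v = Σ_j (∫ v φ_j / ∫ φ_j) ∫ φ_j = ∫ v Σ_j φ_j = ∫ v`.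
Applying this to `v = |u|` gives `∫ |I u| ≤ ∫ I |u| = ∫ |u|`.
-/

open MeasureTheory

namespace QuasiInterpolation

variable {X ι : Type*} [MeasurableSpace X] {μ : Measure X} [Fintype ι] {φ : ι → X → ℝ}

noncomputable def quasiInterp (μ : Measure X) (φ : ι → X → ℝ) (u : X → ℝ) (x : X) : ℝ :=
  ∑ j, ((∫ y, u y * φ j y ∂μ) / (∫ y, φ j y ∂μ)) * φ j x

lemma ae_le_one_of_sum_eq_one (hφ : ∀ j x, 0 ≤ φ j x) (hsum : ∀ᵐ x ∂μ, ∑ j, φ j x = 1)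
    (j : ι) : ∀ᵐ x ∂μ, φ j x ≤ 1 := by
  filter_upwards [hsum] with x hx
  exact hx ▸ Finset.single_le_sum (fun i _ => hφ i x) (Finset.mem_univ j)

lemma integrable_mul_of_ae_le_one {v w : X → ℝ} (hv : Integrable v μ)
    (hw : AEStronglyMeasurable w μ) (hw₀ : ∀ x, 0 ≤ w x) (hw₁ : ∀ᵐ x ∂μ, w x ≤ 1) :
    Integrable (fun x => v x * w x) μ := by
  refine hv.mono (hv.aestronglyMeasurable.mul hw) ?_
  filter_upwards [hw₁] with x hx
  rw [norm_mul, Real.norm_of_nonneg (hw₀ x)]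
  exact mul_le_of_le_one_right (norm_nonneg _) hx

lemma abs_quasiInterp_le (hφ : ∀ j x, 0 ≤ φ j x) (u : X → ℝ) (x : X) :
    |quasiInterp μ φ u x| ≤ quasiInterp μ φ (fun y => |u y|) x := by
  refine (Finset.abs_sum_le_sum_abs _ _).trans (Finset.sum_le_sum fun j _ => ?_)
  have hmean : |∫ y, u y * φ j y ∂μ| ≤ ∫ y, |u y| * φ j y ∂μ := by
    simpa only [Real.norm_eq_abs, abs_mul, abs_of_nonneg (hφ j _)] using
      norm_integral_le_integral_norm (fun y => u y * φ j y) (μ := μ)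
  have hmass : 0 ≤ ∫ y, φ j y ∂μ := integral_nonneg (hφ j)
  rw [abs_mul, abs_div, abs_of_nonneg (hφ j x), abs_of_nonneg hmass]
  gcongr
  exact hφ j x

lemma integrable_quasiInterp (hφ : ∀ j, ∫ x, φ j x ∂μ ≠ 0) (u : X → ℝ) :
    Integrable (quasiInterp μ φ u) μ :=
  -- a non-integrable function has Bochner integral `0`
  integrable_finsetSum _ fun j _ => (Integrable.of_integral_ne_zero (hφ j)).const_mul _

lemma integral_quasiInterp (hφ₀ : ∀ j x, 0 ≤ φ j x) (hφ : ∀ j, ∫ x, φ j x ∂μ ≠ 0)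
    (hsum : ∀ᵐ x ∂μ, ∑ j, φ j x = 1) {v : X → ℝ} (hv : Integrable v μ) :
    ∫ x, quasiInterp μ φ v x ∂μ = ∫ x, v x ∂μ := by
  have hφi (j : ι) : Integrable (φ j) μ := .of_integral_ne_zero (hφ j)
  have hvφ (j : ι) : Integrable (fun x => v x * φ j x) μ :=
    integrable_mul_of_ae_le_one hv (hφi j).aestronglyMeasurable (hφ₀ j)
      (ae_le_one_of_sum_eq_one hφ₀ hsum j)
  calc ∫ x, quasiInterp μ φ v x ∂μ
      = ∑ j, (∫ y, v y * φ j y ∂μ) / (∫ y, φ j y ∂μ) * ∫ x, φ j x ∂μ := by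
        simp only [quasiInterp]
        rw [integral_finsetSum _ fun j _ => (hφi j).const_mul _]
        simp only [integral_const_mul]
    _ = ∑ j, ∫ x, v x * φ j x ∂μ := by
        simp only [div_mul_cancel₀ _ (hφ _)]
    _ = ∫ x, v x * ∑ j, φ j x ∂μ := by
        simp only [Finset.mul_sum]
        exact (integral_finsetSum _ fun j _ => hvφ j).symm
    _ = ∫ x, v x ∂μ := by
        refine integral_congr_ae ?_
        filter_upwards [hsum] with x hx
        rw [hx, mul_one]

end QuasiInterpolation

open QuasiInterpolation in
theorem stmt_14_general
    {X : Type*} [MeasurableSpace X] (μ : Measure X)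
    (n : ℕ) (φ : Fin n → X → ℝ)
    (hφnonneg : ∀ j, ∀ x, 0 ≤ φ j x)
    (hφint : ∀ j, 0 < ∫ x, φ j x ∂μ)
    (hφsum : ∀ᵐ x ∂μ, ∑ j, φ j x = 1)
    (u : X → ℝ) (hu : Integrable u μ)
    (Iu : X → ℝ)
    (hIu : ∀ x, Iu x =
      ∑ j, ((∫ y, u y * φ j y ∂μ) / (∫ y, φ j y ∂μ)) * φ j x) :
    (∫ x, |Iu x| ∂μ) ≤ ∫ x, |u x| ∂μ := by
  have hφne : ∀ j, ∫ x, φ j x ∂μ ≠ 0 := fun j => (hφint j).ne'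
  have hIu' : Iu = quasiInterp μ φ u := funext hIu
  subst hIu'
  calc ∫ x, |quasiInterp μ φ u x| ∂μ
      ≤ ∫ x, quasiInterp μ φ (fun y => |u y|) x ∂μ :=
        integral_mono_of_nonneg (.of_forall fun _ => abs_nonneg _)
          (integrable_quasiInterp hφne _) (.of_forall (abs_quasiInterp_le hφnonneg u))
    _ = ∫ x, |u x| ∂μ := integral_quasiInterp hφnonneg hφne hφsum hu.abs

theorem stmt_14
    {X : Type*} [MeasurableSpace X] (μ : Measure X) [IsFiniteMeasure μ]
    (hμpos : 0 < μ Set.univ)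
    (n : ℕ) (φ : Fin n → X → ℝ)
    (hφmeas : ∀ j, Measurable (φ j))
    (hφbdd : ∀ j, ∃ C : ℝ, ∀ x, |φ j x| ≤ C)
    (hφnonneg : ∀ j, ∀ x, 0 ≤ φ j x)
    (hφint : ∀ j, 0 < ∫ x, φ j x ∂μ)
    (hφsum : ∀ᵐ x ∂μ, ∑ j, φ j x = 1)
    (u : X → ℝ) (hu : Integrable u μ)
    (Iu : X → ℝ)
    (hIu : ∀ x, Iu x =
      ∑ j, ((∫ y, u y * φ j y ∂μ) / (∫ y, φ j y ∂μ)) * φ j x) :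
    (∫ x, |Iu x| ∂μ) ≤ ∫ x, |u x| ∂μ :=
  stmt_14_general μ n φ hφnonneg hφint hφsum u hu Iu hIu
end

section
/- With the quasi-interpolation operator I as above, if 𝔩 ≤ 0 ≤ 𝔲 are real constants and u ∈ L¹(D) satisfies 𝔩 ≤ u ≤ 𝔲 a.e., then 𝔩 ≤ I u ≤ 𝔲 a.e. -/
open MeasureTheory Set

section WeightedAverage

variable {X : Type*} [MeasurableSpace X] {μ : Measure X}

theorem integral_mul_div_integral_mem_Icc {u w : X → ℝ} {a b : ℝ}
    (huw : Integrable (fun x => u x * w x) μ) (hw_nonneg : ∀ᵐ x ∂μ, 0 ≤ w x)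
    (hw_pos : 0 < ∫ x, w x ∂μ) (hu : ∀ᵐ x ∂μ, u x ∈ Icc a b) :
    (∫ x, u x * w x ∂μ) / (∫ x, w x ∂μ) ∈ Icc a b := by
  -- a non-integrable function has Bochner integral `0`, so `hw_pos` forces integrability
  have hw : Integrable w μ := .of_integral_ne_zero hw_pos.ne'
  constructor
  · rw [le_div_iff₀ hw_pos, ← integral_const_mul]
    refine integral_mono_ae (hw.const_mul a) huw ?_
    filter_upwards [hu, hw_nonneg] with x hux hwx
    exact mul_le_mul_of_nonneg_right hux.1 hwx
  · rw [div_le_iff₀ hw_pos, ← integral_const_mul]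
    refine integral_mono_ae huw (hw.const_mul b) ?_
    filter_upwards [hu, hw_nonneg] with x hux hwx
    exact mul_le_mul_of_nonneg_right hux.2 hwx

end WeightedAverage

theorem Finset.sum_mul_mem_Icc_of_sum_eq_one {ι : Type*} (s : Finset ι) {c w : ι → ℝ}
    {a b : ℝ} (hw_nonneg : ∀ i ∈ s, 0 ≤ w i) (hw_sum : ∑ i ∈ s, w i = 1)
    (hc : ∀ i ∈ s, c i ∈ Set.Icc a b) : ∑ i ∈ s, c i * w i ∈ Set.Icc a b := by
  simpa only [smul_eq_mul, mul_comm] using (convex_Icc a b).sum_mem hw_nonneg hw_sum hc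

theorem stmt_15_general
    {X : Type*} [MeasurableSpace X] (μ : Measure X)
    (n : ℕ) (φ : Fin n → X → ℝ)
    (hφbdd : ∀ j, ∃ C : ℝ, ∀ x, |φ j x| ≤ C)
    (hφnonneg : ∀ j, ∀ x, 0 ≤ φ j x)
    (hφint : ∀ j, 0 < ∫ x, φ j x ∂μ)
    (hφsum : ∀ᵐ x ∂μ, ∑ j, φ j x = 1)
    (𝔩 𝔲 : ℝ)
    (u : X → ℝ) (hu : Integrable u μ)
    (hbox : ∀ᵐ x ∂μ, 𝔩 ≤ u x ∧ u x ≤ 𝔲)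
    (Iu : X → ℝ)
    (hIu : ∀ x, Iu x =
      ∑ j, ((∫ y, u y * φ j y ∂μ) / (∫ y, φ j y ∂μ)) * φ j x) :
    ∀ᵐ x ∂μ, 𝔩 ≤ Iu x ∧ Iu x ≤ 𝔲 := by
  have hcoeff : ∀ j, (∫ y, u y * φ j y ∂μ) / (∫ y, φ j y ∂μ) ∈ Icc 𝔩 𝔲 := fun j => by
    obtain ⟨C, hC⟩ := hφbdd j
    have hφ : Integrable (φ j) μ := .of_integral_ne_zero (hφint j).ne'
    refine integral_mul_div_integral_mem_Icc ?_ (ae_of_all _ (hφnonneg j)) (hφint j) hbox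
    exact hu.mul_bdd hφ.aestronglyMeasurable (ae_of_all _ hC)
  filter_upwards [hφsum] with x hx
  rw [hIu x]
  exact Finset.univ.sum_mul_mem_Icc_of_sum_eq_one (fun j _ => hφnonneg j x) hx
    (fun j _ => hcoeff j)

theorem stmt_15
    {X : Type*} [MeasurableSpace X] (μ : Measure X) [IsFiniteMeasure μ]
    (hμpos : 0 < μ Set.univ)
    (n : ℕ) (φ : Fin n → X → ℝ)
    (hφmeas : ∀ j, Measurable (φ j))
    (hφbdd : ∀ j, ∃ C : ℝ, ∀ x, |φ j x| ≤ C)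
    (hφnonneg : ∀ j, ∀ x, 0 ≤ φ j x)
    (hφint : ∀ j, 0 < ∫ x, φ j x ∂μ)
    (hφsum : ∀ᵐ x ∂μ, ∑ j, φ j x = 1)
    (𝔩 𝔲 : ℝ) (h𝔩 : 𝔩 ≤ 0) (h𝔲 : 0 ≤ 𝔲)
    (u : X → ℝ) (hu : Integrable u μ)
    (hbox : ∀ᵐ x ∂μ, 𝔩 ≤ u x ∧ u x ≤ 𝔲)
    (Iu : X → ℝ)
    (hIu : ∀ x, Iu x =
      ∑ j, ((∫ y, u y * φ j y ∂μ) / (∫ y, φ j y ∂μ)) * φ j x) :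
    ∀ᵐ x ∂μ, 𝔩 ≤ Iu x ∧ Iu x ≤ 𝔲 :=
  stmt_15_general μ n φ hφbdd hφnonneg hφint hφsum 𝔩 𝔲 u hu hbox Iu hIu
end
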